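/- arXiv:math/0403360 — 4 statements merged into one kernel-verified Lean document; each statement's English description precedes it below -/
import Mathlib

section
/- Let $k, u \geq 1$ be integers and let $p_1 < p_2 < \cdots < p_u$ and $q_1 < q_2 < \cdots < q_u$ be primes. If $\sum_{i=1}^u 1/p_i^k = \sum_{i=1}^u 1/q_i^k$ as rational numbers, then $p_i = q_i$ for all $i = 1, \ldots, u$. -/
open Finset

-- valuation of one term 1/(m)^k where r ∤ m
lemma val_term_zero (r : ℕ) [Fact r.Prime] (m k : ℕ) (hm : m ≠ 0) (hdvd : ¬ r ∣ m) :
    padicValRat r ((1 : ℚ) / (m : ℚ) ^ k) = 0 := by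
  rw [one_div, padicValRat.inv, ← Nat.cast_pow, padicValRat.of_nat,
    padicValNat.eq_zero_of_not_dvd (by
      intro hd
      exact hdvd ((Nat.Prime.dvd_of_dvd_pow (Fact.out) hd)))]
  simp

lemma val_sum_nonneg (r : ℕ) [Fact r.Prime] {n : ℕ} (k : ℕ) (f : Fin n → ℕ) (s : Finset (Fin n))
    (hf : ∀ i, (f i).Prime) (hr : ∀ i ∈ s, ¬ r ∣ f i) :
    0 ≤ padicValRat r (∑ i ∈ s, (1 : ℚ) / (f i) ^ k) := by
  induction s using Finset.induction with
  | empty => simp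
  | @insert a s hnot ih =>
    rw [Finset.sum_insert hnot]
    have hterm : padicValRat r ((1 : ℚ) / (f a) ^ k) = 0 :=
      val_term_zero r _ k (hf a).ne_zero (hr a (mem_insert_self a s))
    by_cases hs : (∑ i ∈ s, (1 : ℚ) / (f i) ^ k) = 0
    · rw [hs, add_zero, hterm]
    · have hne : (1 : ℚ) / (f a) ^ k + ∑ i ∈ s, (1 : ℚ) / (f i) ^ k ≠ 0 := by
        positivity
      have := padicValRat.min_le_padicValRat_add (p := r) hne
      have h2 : 0 ≤ padicValRat r (∑ i ∈ s, (1 : ℚ) / (f i) ^ k) :=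
        ih (fun i hi => hr i (mem_insert_of_mem hi))
      exact le_trans (le_min hterm.ge h2) this

lemma val_sum_neg_iff (r : ℕ) [Fact r.Prime] {n k : ℕ} (hk : 1 ≤ k) (f : Fin n → ℕ)
    (hf : ∀ i, (f i).Prime) (hinj : Function.Injective f) :
    padicValRat r (∑ i, (1 : ℚ) / (f i) ^ k) < 0 ↔ ∃ i, f i = r := by
  constructor
  · intro hval
    by_contra hno
    push_neg at hno
    have h0 := val_sum_nonneg r k f Finset.univ hf (fun i _ hd => hno i
      ((Nat.prime_dvd_prime_iff_eq Fact.out (hf i)).mp hd).symm)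
    omega
  · rintro ⟨i, hi⟩
    rw [← Finset.add_sum_erase _ _ (Finset.mem_univ i)]
    have hterm : padicValRat r ((1 : ℚ) / (f i) ^ k) = -(k : ℤ) := by
      rw [hi, one_div]
      exact padicValRat.self_pow_inv k
    have hrest : 0 ≤ padicValRat r (∑ j ∈ Finset.univ.erase i, (1 : ℚ) / (f j) ^ k) :=
      val_sum_nonneg r k f _ hf (fun j hj hd => (Finset.ne_of_mem_erase hj)
        (hinj (by rw [hi, ((Nat.prime_dvd_prime_iff_eq Fact.out (hf j)).mp hd)])))
    by_cases hz : (∑ j ∈ Finset.univ.erase i, (1 : ℚ) / (f j) ^ k) = 0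
    · rw [hz, add_zero, hterm]; omega
    · have htne : (1 : ℚ) / (f i) ^ k ≠ 0 :=
        one_div_ne_zero (pow_ne_zero _ (Nat.cast_ne_zero.mpr (hf i).ne_zero))
      have htpos : 0 < (1 : ℚ) / (f i) ^ k := by
        have : (0:ℚ) < (f i : ℚ) := by exact_mod_cast (hf i).pos
        positivity
      have hrnn : 0 ≤ ∑ j ∈ Finset.univ.erase i, (1 : ℚ) / (f j) ^ k :=
        Finset.sum_nonneg fun j _ => by positivity
      rw [padicValRat.add_eq_of_lt (p := r)
        (ne_of_gt (add_pos_of_pos_of_nonneg htpos hrnn)) htne hz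
        (by rw [hterm]; omega), hterm]
      omega

theorem stmt_0 (k u : ℕ) (hk : 1 ≤ k) (hu : 1 ≤ u)
    (p q : Fin u → ℕ) (hp : ∀ i, (p i).Prime) (hq : ∀ i, (q i).Prime)
    (hpm : StrictMono p) (hqm : StrictMono q)
    (h : ∑ i, (1 : ℚ) / (p i) ^ k = ∑ i, (1 : ℚ) / (q i) ^ k) :
    ∀ i, p i = q i := by
  have key : ∀ r : ℕ, (∃ i, p i = r) ↔ (∃ i, q i = r) := by
    intro r
    constructor
    · rintro ⟨i, hi⟩
      haveI : Fact r.Prime := ⟨hi ▸ hp i⟩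
      exact (val_sum_neg_iff r hk q hq hqm.injective).mp
        (h ▸ (val_sum_neg_iff r hk p hp hpm.injective).mpr ⟨i, hi⟩)
    · rintro ⟨i, hi⟩
      haveI : Fact r.Prime := ⟨hi ▸ hq i⟩
      exact (val_sum_neg_iff r hk p hp hpm.injective).mp
        (h ▸ (val_sum_neg_iff r hk q hq hqm.injective).mpr ⟨i, hi⟩)
  have himg : Finset.image p Finset.univ = Finset.image q Finset.univ := by
    ext a
    simp only [Finset.mem_image, Finset.mem_univ, true_and]
    exact key a
  have hcard : (Finset.image p Finset.univ).card = u := by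
    rw [Finset.card_image_of_injective _ hpm.injective, Finset.card_univ, Fintype.card_fin]
  have hpe := Finset.orderEmbOfFin_unique hcard
    (f := p) (fun x => Finset.mem_image_of_mem p (Finset.mem_univ x)) hpm
  have hqe := Finset.orderEmbOfFin_unique hcard
    (f := q) (fun x => himg ▸ Finset.mem_image_of_mem q (Finset.mem_univ x)) hqm
  intro i
  rw [hpe, hqe]
end

section
/- Let $p$ be a prime, $k, u \geq 1$ integers, and $\beta > 0$ a real number with $p^{(2u-1)k\beta} < p/u$. Let $p_1 < \cdots < p_u \leq p^\beta$ and $q_1 < \cdots < q_u \leq p^\beta$ be primes. If $\sum_{i=1}^u (p_i^k)^{-1} \equiv \sum_{i=1}^u (q_i^k)^{-1} \pmod{p}$ (inverses taken in $\mathbb{Z}/p\mathbb{Z}$), then $p_i = q_i$ for all $i$. -/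
open Finset

private lemma myBound (p k u : ℕ) (hp : 1 ≤ p) (hu : 1 ≤ u) (β : ℝ)
    (hsize : (p : ℝ) ^ ((2 * u - 1 : ℝ) * k * β) < (p : ℝ) / u)
    (P Q : Fin u → ℕ)
    (hPb : ∀ i, (P i : ℝ) ≤ (p : ℝ) ^ β) (hQb : ∀ i, (Q i : ℝ) ≤ (p : ℝ) ^ β) :
    (∑ i, ∏ j ∈ univ.erase i, P j ^ k) * ∏ j, Q j ^ k < p := by
  have hp0 : (0:ℝ) ≤ (p:ℝ) := by positivity
  set c : ℝ := ((p:ℝ) ^ β) ^ k with hc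
  have hc0 : 0 ≤ c := by positivity
  have hPk : ∀ i, ((P i ^ k : ℕ) : ℝ) ≤ c := by
    intro i; push_cast
    exact pow_le_pow_left₀ (by positivity) (hPb i) k
  have hQk : ∀ i, ((Q i ^ k : ℕ) : ℝ) ≤ c := by
    intro i; push_cast
    exact pow_le_pow_left₀ (by positivity) (hQb i) k
  have hprodQ : ((∏ j, Q j ^ k : ℕ) : ℝ) ≤ c ^ u := by
    push_cast
    calc ∏ j, (Q j : ℝ) ^ k ≤ ∏ _j : Fin u, c := by
          apply Finset.prod_le_prod (fun i _ => by positivity)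
          intro i _
          have := hQk i; push_cast at this; exact this
      _ = c ^ u := by rw [Finset.prod_const, Finset.card_univ, Fintype.card_fin]
  have hprodP : ∀ i : Fin u, ((∏ j ∈ univ.erase i, P j ^ k : ℕ) : ℝ) ≤ c ^ (u - 1) := by
    intro i
    push_cast
    calc ∏ j ∈ univ.erase i, (P j : ℝ) ^ k ≤ ∏ _j ∈ univ.erase i, c := by
          apply Finset.prod_le_prod (fun j _ => by positivity)
          intro j _
          have := hPk j; push_cast at this; exact this
      _ = c ^ (u - 1) := by
          rw [Finset.prod_const, Finset.card_erase_of_mem (mem_univ i), Finset.card_univ,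
            Fintype.card_fin]
  have hcpow : c ^ (u - 1) * c ^ u = (p:ℝ) ^ ((2 * u - 1 : ℝ) * k * β) := by
    rw [← pow_add]
    have harith : u - 1 + u = 2 * u - 1 := by omega
    rw [harith, hc, ← Real.rpow_natCast ((p:ℝ)^β) k, ← Real.rpow_mul hp0,
      ← Real.rpow_natCast _ (2*u-1), ← Real.rpow_mul hp0]
    congr 1
    have : ((2 * u - 1 : ℕ) : ℝ) = 2 * u - 1 := by
      push_cast [Nat.cast_sub (by omega : 1 ≤ 2 * u)]; ring
    rw [this]; ring
  have hu0 : (0:ℝ) < u := by exact_mod_cast Nat.lt_of_lt_of_le Nat.zero_lt_one hu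
  have key : (((∑ i, ∏ j ∈ univ.erase i, P j ^ k) * ∏ j, Q j ^ k : ℕ) : ℝ) < p := by
    push_cast only [Nat.cast_mul, Nat.cast_sum]
    have h1 : (∑ i, ((∏ j ∈ univ.erase i, P j ^ k : ℕ) : ℝ)) * ((∏ j, Q j ^ k : ℕ) : ℝ)
        ≤ (∑ _i : Fin u, c ^ (u - 1)) * c ^ u := by
      apply mul_le_mul _ hprodQ (by positivity) (by positivity)
      exact Finset.sum_le_sum fun i _ => hprodP i
    have h2 : (∑ _i : Fin u, c ^ (u - 1)) * c ^ u = (u:ℝ) * (c ^ (u - 1) * c ^ u) := by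
      rw [Finset.sum_const, Finset.card_univ, Fintype.card_fin, nsmul_eq_mul]; ring
    have h3 : (u:ℝ) * (c ^ (u - 1) * c ^ u) < (u:ℝ) * ((p:ℝ) / u) := by
      rw [hcpow]; exact mul_lt_mul_of_pos_left hsize hu0
    have h4 : (u:ℝ) * ((p:ℝ) / u) = p := by field_simp
    linarith
  exact_mod_cast key

private lemma myMem (k u : ℕ) (hk : 1 ≤ k) (P Q : Fin u → ℕ)
    (hP : ∀ i, (P i).Prime) (hQ : ∀ i, (Q i).Prime)
    (hPinj : Function.Injective P)
    (heq : (∑ i, ∏ j ∈ univ.erase i, P j ^ k) * ∏ j, Q j ^ k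
         = (∑ i, ∏ j ∈ univ.erase i, Q j ^ k) * ∏ j, P j ^ k)
    (i0 : Fin u) : ∃ j, Q j = P i0 := by
  set r := P i0 with hr
  have hrp : r.Prime := hP i0
  have hrpr : Prime r := hrp.prime
  have hdvd1 : r ∣ (∑ i, ∏ j ∈ univ.erase i, Q j ^ k) * ∏ j, P j ^ k := by
    apply Dvd.dvd.mul_left
    exact dvd_trans (dvd_pow_self r (by omega)) (Finset.dvd_prod_of_mem _ (mem_univ i0))
  rw [← heq] at hdvd1
  rcases hrpr.dvd_mul.1 hdvd1 with hA | hQd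
  · -- r divides the sum A
    have hrest : r ∣ ∑ i ∈ univ.erase i0, ∏ j ∈ univ.erase i, P j ^ k := by
      apply Finset.dvd_sum
      intro i hi
      have hi0 : i0 ∈ univ.erase i :=
        Finset.mem_erase.2 ⟨fun hc => (Finset.mem_erase.1 hi).1 hc.symm, mem_univ _⟩
      exact dvd_trans (dvd_pow_self r (by omega)) (Finset.dvd_prod_of_mem _ hi0)
    have hsplit : (∑ i, ∏ j ∈ univ.erase i, P j ^ k)
        = (∏ j ∈ univ.erase i0, P j ^ k) + ∑ i ∈ univ.erase i0, ∏ j ∈ univ.erase i, P j ^ k :=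
      (Finset.add_sum_erase _ _ (mem_univ i0)).symm
    have hterm : r ∣ ∏ j ∈ univ.erase i0, P j ^ k := by
      have := hA
      rw [hsplit] at this
      exact (Nat.dvd_add_right hrest).mp (by rwa [Nat.add_comm] at this)
    obtain ⟨j, hj, hjd⟩ := (hrpr.dvd_finset_prod_iff _).1 hterm
    have : r = P j := (Nat.prime_dvd_prime_iff_eq hrp (hP j)).1 (hrpr.dvd_of_dvd_pow hjd)
    exact absurd (hPinj this.symm) (Finset.mem_erase.1 hj).1
  · obtain ⟨j, _, hjd⟩ := (hrpr.dvd_finset_prod_iff _).1 hQd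
    exact ⟨j, ((Nat.prime_dvd_prime_iff_eq hrp (hQ j)).1 (hrpr.dvd_of_dvd_pow hjd)).symm⟩

theorem stmt_2 (p : ℕ) [Fact p.Prime] (k u : ℕ) (hk : 1 ≤ k) (hu : 1 ≤ u)
    (β : ℝ) (hβ : 0 < β)
    (hsize : (p : ℝ) ^ ((2 * u - 1 : ℝ) * k * β) < (p : ℝ) / u)
    (P Q : Fin u → ℕ) (hP : ∀ i, (P i).Prime) (hQ : ∀ i, (Q i).Prime)
    (hPm : StrictMono P) (hQm : StrictMono Q)
    (hPb : ∀ i, (P i : ℝ) ≤ (p : ℝ) ^ β) (hQb : ∀ i, (Q i : ℝ) ≤ (p : ℝ) ^ β)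
    (h : ∑ i, ((P i : ZMod p) ^ k)⁻¹ = ∑ i, ((Q i : ZMod p) ^ k)⁻¹) :
    ∀ i, P i = Q i := by
  have hpP : Fact p.Prime := inferInstance
  have hp2 : 2 ≤ p := hpP.out.two_le
  have hp1 : (1:ℝ) ≤ (p:ℝ) := by exact_mod_cast Nat.one_le_of_lt hp2
  -- everything ≤ p^β is < p
  have hlt : (p:ℝ) ^ β < p := by
    have h1 : β ≤ (2 * u - 1 : ℝ) * k * β := by
      have h2 : (1:ℝ) ≤ (2 * u - 1 : ℝ) * k := by
        have hu1 : (1:ℝ) ≤ (u:ℝ) := by exact_mod_cast hu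
        have hk1 : (1:ℝ) ≤ (k:ℝ) := by exact_mod_cast hk
        nlinarith
      nlinarith
    calc (p:ℝ) ^ β ≤ (p:ℝ) ^ ((2 * u - 1 : ℝ) * k * β) :=
          Real.rpow_le_rpow_of_exponent_le hp1 h1
      _ < (p:ℝ) / u := hsize
      _ ≤ p := by
          apply div_le_self (by linarith)
          exact_mod_cast hu
  have hPlt : ∀ i, P i < p := fun i => by
    exact_mod_cast lt_of_le_of_lt (hPb i) hlt
  have hQlt : ∀ i, Q i < p := fun i => by
    exact_mod_cast lt_of_le_of_lt (hQb i) hlt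
  have hPne : ∀ i, ((P i : ZMod p)) ^ k ≠ 0 := by
    intro i
    apply pow_ne_zero
    rw [Ne, ZMod.natCast_eq_zero_iff]
    intro hd
    exact absurd (Nat.le_of_dvd (hP i).pos hd) (not_le.2 (hPlt i))
  have hQne : ∀ i, ((Q i : ZMod p)) ^ k ≠ 0 := by
    intro i
    apply pow_ne_zero
    rw [Ne, ZMod.natCast_eq_zero_iff]
    intro hd
    exact absurd (Nat.le_of_dvd (hQ i).pos hd) (not_le.2 (hQlt i))
  -- the key cast identity
  have key : ∀ (R : Fin u → ℕ), (∀ i, ((R i : ZMod p)) ^ k ≠ 0) →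
      ((∑ i, ∏ j ∈ univ.erase i, R j ^ k : ℕ) : ZMod p)
        = (∑ i, ((R i : ZMod p) ^ k)⁻¹) * ((∏ j, R j ^ k : ℕ) : ZMod p) := by
    intro R hne
    push_cast
    rw [Finset.sum_mul]
    apply Finset.sum_congr rfl
    intro i _
    rw [← Finset.mul_prod_erase _ (fun j => (R j : ZMod p) ^ k) (mem_univ i),
      inv_mul_cancel_left₀ (hne i)]
  -- cast equality
  have castEq : (((∑ i, ∏ j ∈ univ.erase i, P j ^ k) * ∏ j, Q j ^ k : ℕ) : ZMod p)
      = (((∑ i, ∏ j ∈ univ.erase i, Q j ^ k) * ∏ j, P j ^ k : ℕ) : ZMod p) := by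
    rw [Nat.cast_mul, Nat.cast_mul, key P hPne, key Q hQne, h]
    ring
  -- natural number equality
  have hb1 := myBound p k u (by omega) hu β hsize P Q hPb hQb
  have hb2 := myBound p k u (by omega) hu β (by
    have : ((2:ℝ) * u - 1) * k * β = (2 * u - 1 : ℝ) * k * β := by ring
    rwa [this]) Q P hQb hPb
  have hnatEq : (∑ i, ∏ j ∈ univ.erase i, P j ^ k) * ∏ j, Q j ^ k
      = (∑ i, ∏ j ∈ univ.erase i, Q j ^ k) * ∏ j, P j ^ k := by
    have := (ZMod.natCast_eq_natCast_iff _ _ _).1 castEq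
    unfold Nat.ModEq at this
    rwa [Nat.mod_eq_of_lt hb1, Nat.mod_eq_of_lt hb2] at this
  -- ranges are equal
  have hsub1 : Set.range P ⊆ Set.range Q := by
    rintro x ⟨i, rfl⟩
    obtain ⟨j, hj⟩ := myMem k u hk P Q hP hQ hPm.injective hnatEq i
    exact ⟨j, hj⟩
  have hsub2 : Set.range Q ⊆ Set.range P := by
    rintro x ⟨i, rfl⟩
    obtain ⟨j, hj⟩ := myMem k u hk Q P hQ hP hQm.injective hnatEq.symm i
    exact ⟨j, hj⟩
  have hrange : Set.range P = Set.range Q := le_antisymm hsub1 hsub2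
  haveI : WellFoundedLT (Fin u) := inferInstance
  have := (StrictMono.range_inj hPm hQm).1 hrange
  intro i; rw [this]
end

section
/- Let $p$ be a prime and let $T \subseteq \mathbb{Z}/p\mathbb{Z}$ satisfy $|T| > p^{1/2+\beta}$ for some real $\beta > 0$. Let $J = \lfloor 2(1+2\beta)/\beta \rfloor + 1$. Then for every residue class $r \in \mathbb{Z}/p\mathbb{Z}$, there exist elements $t_1, t_2, \ldots, t_{2J} \in T$ such that $r = t_1 t_2 + t_3 t_4 + \cdots + t_{2J-1} t_{2J}$ in $\mathbb{Z}/p\mathbb{Z}$. -/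
/-!
Fourier analysis on a finite field `𝔽_q` with a primitive additive character `ψ`. Writing
`S(x) = ∑_{a, b ∈ T} ψ(x a b)`, the number `N` of representations of `r` satisfies
`q N = ∑_x S(x)^J ψ(-x r)`. The term `x = 0` is `|T|^(2J)`, and for `x ≠ 0` Cauchy–Schwarz in `a`
followed by Parseval in `b` gives `|S(x)| ≤ √q |T|`. Hence `N > 0` as soon as
`q (√q |T|)^J < |T|^(2J)`, i.e. `|T|^J > q^(1 + J/2)`, which follows from `|T| > q^(1/2 + β)`
once `β J > 1`.
-/

open Finset

namespace AddChar

lemma map_sum_eq_prod {A M ι : Type*} [AddCommMonoid A] [CommMonoid M] (ψ : AddChar A M)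
    (s : Finset ι) (f : ι → A) : ψ (∑ i ∈ s, f i) = ∏ i ∈ s, ψ (f i) := by
  classical
  induction s using Finset.induction_on with
  | empty => simp
  | insert a s ha ih => rw [sum_insert ha, prod_insert ha, map_add_eq_mul, ih]

variable {F : Type*} [Field F] [Fintype F] [DecidableEq F] {ψ : AddChar F ℂ}

lemma sum_mul_map_neg_mul_eq_card_mul_card_filter (hψ : ψ.IsPrimitive) {ι : Type*}
    (s : Finset ι) (f : ι → F) (r : F) :
    ∑ x, (∑ i ∈ s, ψ (x * f i)) * ψ (-(x * r)) = Fintype.card F * #{i ∈ s | f i = r} := by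
  calc ∑ x, (∑ i ∈ s, ψ (x * f i)) * ψ (-(x * r))
      = ∑ i ∈ s, ∑ x, ψ (x * (f i - r)) := by
        rw [sum_comm]
        simp only [sum_mul, ← map_add_eq_mul, ← sub_eq_add_neg, ← mul_sub]
    _ = ∑ i ∈ s, if f i = r then (Fintype.card F : ℂ) else 0 := by
        simp only [sum_mulShift _ hψ, sub_eq_zero, Nat.cast_ite, Nat.cast_zero]
    _ = Fintype.card F * #{i ∈ s | f i = r} := by
        rw [sum_ite, sum_const_zero, add_zero, sum_const, nsmul_eq_mul, mul_comm]

lemma sum_norm_sq_sum_map_mul (hψ : ψ.IsPrimitive) (B : Finset F) :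
    ∑ a, ‖∑ b ∈ B, ψ (a * b)‖ ^ 2 = Fintype.card F * #B := by
  have hsq : ∀ z : ℂ, (‖z‖ : ℂ) ^ 2 = z * (starRingEnd ℂ) z := fun z => by
    rw [Complex.mul_conj, Complex.normSq_eq_norm_sq, Complex.ofReal_pow]
  apply Complex.ofReal_injective
  push_cast
  simp only [hsq, map_sum, sum_mul_sum, ← map_neg_eq_conj, ← map_add_eq_mul]
  calc ∑ a, ∑ b ∈ B, ∑ b' ∈ B, ψ (a * b + -(a * b'))
      = ∑ b ∈ B, ∑ b' ∈ B, ∑ a, ψ (a * (b - b')) := by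
        simp only [← sub_eq_add_neg, ← mul_sub]
        rw [sum_comm]
        exact sum_congr rfl fun b _ => sum_comm
    _ = ∑ b ∈ B, (Fintype.card F : ℂ) := by
        refine sum_congr rfl fun b hb => ?_
        simp only [sum_mulShift _ hψ, sub_eq_zero, Nat.cast_ite, Nat.cast_zero, sum_ite_eq,
          if_pos hb]
    _ = Fintype.card F * #B := by rw [sum_const, nsmul_eq_mul, mul_comm]

lemma norm_sum_sum_map_mul_sq_le (hψ : ψ.IsPrimitive) (A B : Finset F) :
    ‖∑ a ∈ A, ∑ b ∈ B, ψ (a * b)‖ ^ 2 ≤ #A * (Fintype.card F * #B) := by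
  calc ‖∑ a ∈ A, ∑ b ∈ B, ψ (a * b)‖ ^ 2
      ≤ (∑ a ∈ A, ‖∑ b ∈ B, ψ (a * b)‖) ^ 2 := by gcongr; exact norm_sum_le _ _
    _ ≤ #A * ∑ a ∈ A, ‖∑ b ∈ B, ψ (a * b)‖ ^ 2 := sq_sum_le_card_mul_sum_sq
    _ ≤ #A * ∑ a, ‖∑ b ∈ B, ψ (a * b)‖ ^ 2 := by
        gcongr
        exact subset_univ A
    _ = #A * (Fintype.card F * #B) := by rw [sum_norm_sq_sum_map_mul hψ]

end AddChar

section ProductSums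

variable {F : Type*} [Field F]

def productExpSum (ψ : AddChar F ℂ) (T : Finset F) (x : F) : ℂ :=
  ∑ a ∈ T, ∑ b ∈ T, ψ (x * (a * b))

def productSumReps [DecidableEq F] (T : Finset F) (J : ℕ) (r : F) : Finset (Fin J → F × F) :=
  {g ∈ Fintype.piFinset fun _ => T ×ˢ T | ∑ i, (g i).1 * (g i).2 = r}

variable {ψ : AddChar F ℂ} {T : Finset F}

lemma productExpSum_zero : productExpSum ψ T 0 = (#T : ℂ) ^ 2 := by
  simp [productExpSum, sq]

lemma productExpSum_pow (J : ℕ) (x : F) :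
    productExpSum ψ T x ^ J =
      ∑ g ∈ Fintype.piFinset (fun _ : Fin J => T ×ˢ T), ψ (x * ∑ i, (g i).1 * (g i).2) := by
  have hS : productExpSum ψ T x = ∑ ab ∈ T ×ˢ T, ψ (x * (ab.1 * ab.2)) :=
    (sum_product T T fun ab => ψ (x * (ab.1 * ab.2))).symm
  rw [hS, ← Fin.prod_const, prod_univ_sum]
  simp only [mul_sum, AddChar.map_sum_eq_prod]

variable [Fintype F] [DecidableEq F]

lemma norm_productExpSum_le (hψ : ψ.IsPrimitive) {x : F} (hx : x ≠ 0) :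
    ‖productExpSum ψ T x‖ ≤ √(Fintype.card F) * #T := by
  have hsq := AddChar.norm_sum_sum_map_mul_sq_le (AddChar.IsPrimitive.of_ne_one (hψ hx)) T T
  simp only [AddChar.mulShift_apply] at hsq
  calc ‖productExpSum ψ T x‖ ≤ √(Fintype.card F * #T ^ 2) :=
        Real.le_sqrt_of_sq_le (by unfold productExpSum; linarith)
    _ = √(Fintype.card F) * #T := by
        rw [Real.sqrt_mul (by positivity), Real.sqrt_sq (by positivity)]

lemma card_mul_card_productSumReps (hψ : ψ.IsPrimitive) (J : ℕ) (r : F) :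
    (Fintype.card F : ℂ) * #(productSumReps T J r) =
      ∑ x, productExpSum ψ T x ^ J * ψ (-(x * r)) := by
  simp only [productExpSum_pow]
  exact (AddChar.sum_mul_map_neg_mul_eq_card_mul_card_filter hψ _ _ r).symm

lemma norm_card_mul_card_productSumReps_sub_le (hψ : ψ.IsPrimitive) (J : ℕ) (r : F) :
    ‖(Fintype.card F : ℂ) * #(productSumReps T J r) - (#T : ℂ) ^ (2 * J)‖ ≤
      Fintype.card F * (√(Fintype.card F) * #T) ^ J := by
  have hsplit := add_sum_erase univ (fun x => productExpSum ψ T x ^ J * ψ (-(x * r))) (mem_univ 0)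
  rw [card_mul_card_productSumReps hψ, ← hsplit]
  simp only [productExpSum_zero, zero_mul, neg_zero, AddChar.map_zero_eq_one, mul_one, ← pow_mul,
    add_sub_cancel_left]
  calc ‖∑ x ∈ univ.erase 0, productExpSum ψ T x ^ J * ψ (-(x * r))‖
      ≤ ∑ x ∈ univ.erase 0, ‖productExpSum ψ T x ^ J * ψ (-(x * r))‖ := norm_sum_le _ _
    _ ≤ ∑ _x ∈ univ.erase (0 : F), (√(Fintype.card F) * #T) ^ J := by
        refine sum_le_sum fun x hx => ?_
        rw [norm_mul, norm_pow, AddChar.norm_apply, mul_one]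
        exact pow_le_pow_left₀ (norm_nonneg _) (norm_productExpSum_le hψ (ne_of_mem_erase hx)) J
    _ ≤ Fintype.card F * (√(Fintype.card F) * #T) ^ J := by
        rw [sum_const, nsmul_eq_mul]
        gcongr
        exact_mod_cast (card_erase_le).trans (card_univ (α := F)).le

theorem exists_sum_mul_eq_of_card_mul_pow_lt (T : Finset F) (J : ℕ)
    (hT : Fintype.card F * (√(Fintype.card F) * #T) ^ J < (#T : ℝ) ^ (2 * J)) (r : F) :
    ∃ t₁ t₂ : Fin J → F, (∀ i, t₁ i ∈ T ∧ t₂ i ∈ T) ∧ r = ∑ i, t₁ i * t₂ i := by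
  obtain ⟨g, hg⟩ : (productSumReps T J r).Nonempty := by
    rw [nonempty_iff_ne_empty, Ne, ← card_eq_zero]
    intro h
    have hbound := norm_card_mul_card_productSumReps_sub_le (T := T)
      (AddChar.FiniteField.primitiveChar_to_Complex_isPrimitive F) J r
    rw [h, Nat.cast_zero, mul_zero, zero_sub, norm_neg, norm_pow, Complex.norm_natCast] at hbound
    exact hbound.not_gt hT
  simp only [productSumReps, mem_filter, Fintype.mem_piFinset, mem_product] at hg
  exact ⟨fun i => (g i).1, fun i => (g i).2, hg.1, hg.2.symm⟩

end ProductSums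

lemma mul_sqrt_mul_pow_lt_pow {p K β : ℝ} {J : ℕ} (hp : 1 < p) (hK : p ^ ((1 : ℝ) / 2 + β) < K)
    (hJ : 1 < β * J) : p * (√p * K) ^ J < K ^ (2 * J) := by
  have hp0 : 0 < p := one_pos.trans hp
  have hJ0 : J ≠ 0 := by rintro rfl; norm_num at hJ
  have hsqrt : p * √p ^ J = p ^ (1 + (J : ℝ) / 2) := by
    rw [Real.sqrt_eq_rpow, ← Real.rpow_natCast, ← Real.rpow_mul hp0.le, Real.rpow_add hp0,
      Real.rpow_one]
    ring_nf
  have hKJ : p ^ (((1 : ℝ) / 2 + β) * J) < K ^ J := by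
    rw [Real.rpow_mul hp0.le, Real.rpow_natCast]
    exact pow_lt_pow_left₀ hK (by positivity) hJ0
  have hlt : p * √p ^ J < K ^ J := by
    rw [hsqrt]
    refine lt_trans (Real.rpow_lt_rpow_of_exponent_lt hp ?_) hKJ
    linarith
  calc p * (√p * K) ^ J = (p * √p ^ J) * K ^ J := by ring
    _ < K ^ J * K ^ J := by
        gcongr
        exact pow_pos ((Real.rpow_pos_of_pos hp0 _).trans hK) J
    _ = K ^ (2 * J) := by ring

lemma one_lt_mul_floor_add_one {β : ℝ} (hβ : 0 < β) :
    1 < β * ((⌊2 * (1 + 2 * β) / β⌋₊ + 1 : ℕ) : ℝ) := by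
  have hfloor := Nat.lt_floor_add_one (2 * (1 + 2 * β) / β)
  rw [div_lt_iff₀ hβ] at hfloor
  push_cast
  linarith

theorem stmt_3 (p : ℕ) [Fact p.Prime] (T : Finset (ZMod p)) (β : ℝ) (hβ : 0 < β)
    (hT : (T.card : ℝ) > (p : ℝ) ^ ((1 : ℝ) / 2 + β))
    (J : ℕ) (hJ : J = ⌊2 * (1 + 2 * β) / β⌋₊ + 1) :
    ∀ r : ZMod p, ∃ t₁ t₂ : Fin J → ZMod p,
      (∀ i, t₁ i ∈ T ∧ t₂ i ∈ T) ∧ r = ∑ i, t₁ i * t₂ i := by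
  refine exists_sum_mul_eq_of_card_mul_pow_lt T J ?_
  rw [ZMod.card]
  refine mul_sqrt_mul_pow_lt_pow (mod_cast (Fact.out : p.Prime).one_lt) hT ?_
  exact hJ ▸ one_lt_mul_floor_add_one hβ
end

section
/- Let $k \geq 1$ be an integer, $0 < \beta < 1/(5k)$ real, and let $u$ be the largest integer less than $\beta^{-1}/(2k)$. For a prime $p$, define $S \subseteq \mathbb{Z}/p\mathbb{Z}$ as the set of residues $1/p_1^k + \cdots + 1/p_u^k \bmod p$ over all choices of primes $2 \leq p_1 < \cdots < p_u \leq p^\beta$. Then for all sufficiently large $p$, $|S| > p^{1/(2k) - \beta} / (u! \log^u p)$. -/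
open Finset in
lemma cheb_nat (n : ℕ) (hn : 1 ≤ n) :
    (4:ℕ)^n ≤ (2*n) ^ (((Finset.range (2*n+1)).filter Nat.Prime).card + 1) := by
  have h1 : (4:ℕ)^n ≤ 2 * n * Nat.centralBinom n :=
    Nat.four_pow_le_two_mul_self_mul_centralBinom n hn
  have hcb : Nat.centralBinom n ≠ 0 := Nat.centralBinom_ne_zero n
  have hsub : (Nat.centralBinom n).primeFactors ⊆ (Finset.range (2*n+1)).filter Nat.Prime := by
    intro q hq
    rw [Nat.mem_primeFactors] at hq
    obtain ⟨hqp, hqd, -⟩ := hq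
    simp only [Finset.mem_filter, Finset.mem_range]
    refine ⟨?_, hqp⟩
    by_contra hgt
    have h0 : (Nat.centralBinom n).factorization q = 0 :=
      Nat.factorization_choose_eq_zero_of_lt (by omega)
    exact absurd h0 (Nat.Prime.factorization_pos_of_dvd hqp hcb hqd).ne'
  have h2 : Nat.centralBinom n ≤ (2*n) ^ (((Finset.range (2*n+1)).filter Nat.Prime).card) := by
    calc Nat.centralBinom n
        = ∏ q ∈ (Nat.centralBinom n).primeFactors, q ^ (Nat.centralBinom n).factorization q :=
          (Nat.factorization_prod_pow_eq_self hcb).symm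
      _ ≤ ∏ q ∈ (Nat.centralBinom n).primeFactors, 2*n := by
          refine Finset.prod_le_prod' fun q _ => ?_
          exact Nat.pow_factorization_choose_le (by positivity)
      _ = (2*n) ^ (Nat.centralBinom n).primeFactors.card := by rw [Finset.prod_const]
      _ ≤ _ := Nat.pow_le_pow_right (by omega) (Finset.card_le_card hsub)
  calc (4:ℕ)^n ≤ 2*n * Nat.centralBinom n := h1
    _ ≤ (2*n) * (2*n) ^ (((Finset.range (2*n+1)).filter Nat.Prime).card) :=
        Nat.mul_le_mul_left _ h2
    _ = _ := by ring

lemma cheb_real (m : ℕ) (hm : 2 ≤ m) :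
    Real.log 2 * ((m:ℝ) - 1) / Real.log m - 1
      ≤ (((Finset.range (m+1)).filter Nat.Prime).card : ℝ) := by
  set n := m / 2 with hn
  have hn1 : 1 ≤ n := by omega
  have h2n : 2 * n ≤ m := by omega
  set c := ((Finset.range (2*n+1)).filter Nat.Prime).card with hc
  set C := ((Finset.range (m+1)).filter Nat.Prime).card with hC
  have hcC : c ≤ C := by
    apply Finset.card_le_card
    apply Finset.filter_subset_filter
    exact Finset.range_subset_range.mpr (by omega)
  have hnat := cheb_nat n hn1
  have hreal : ((4:ℝ))^n ≤ ((2*n : ℕ):ℝ) ^ (c+1) := by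
    exact_mod_cast (Nat.cast_le (α := ℝ)).mpr hnat
  have hlog : (n:ℝ) * Real.log 4 ≤ ((c:ℝ)+1) * Real.log (2*n : ℕ) := by
    have h1 : Real.log ((4:ℝ)^n) ≤ Real.log (((2*n:ℕ):ℝ) ^ (c+1)) :=
      Real.log_le_log (by positivity) hreal
    rwa [Real.log_pow, Real.log_pow, Nat.cast_add, Nat.cast_one] at h1
  have hlogm : Real.log ((2*n : ℕ):ℝ) ≤ Real.log m :=
    Real.log_le_log (by positivity) (by exact_mod_cast h2n)
  have hlog4 : Real.log 4 = 2 * Real.log 2 := by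
    rw [show (4:ℝ) = 2^2 by norm_num, Real.log_pow]; push_cast; ring
  have hlogm_pos : 0 < Real.log m :=
    Real.log_pos (by exact_mod_cast hm)
  have key : Real.log 2 * ((m:ℝ) - 1) ≤ ((C:ℝ)+1) * Real.log m := by
    have h2 : Real.log 2 * ((m:ℝ) - 1) ≤ (n:ℝ) * Real.log 4 := by
      rw [hlog4]
      have h4 : ((m:ℝ) - 1) ≤ 2 * (n:ℝ) := by
        have : (m:ℝ) ≤ 2*(n:ℝ) + 1 := by exact_mod_cast (by omega : m ≤ 2*n+1)
        linarith
      nlinarith [Real.log_pos (by norm_num : (1:ℝ) < 2)]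
    have h3 : ((c:ℝ)+1) * Real.log ((2*n:ℕ):ℝ) ≤ ((C:ℝ)+1) * Real.log m := by
      have hc1 : ((c:ℝ)+1) ≤ (C:ℝ)+1 := by exact_mod_cast Nat.succ_le_succ hcC
      have hl2n : 0 ≤ Real.log ((2*n:ℕ):ℝ) := Real.log_natCast_nonneg _
      nlinarith
    linarith
  rw [sub_le_iff_le_add, div_le_iff₀ hlogm_pos]
  linarith

def auxQ (k : ℕ) (s : Finset ℕ) : ℕ := ∏ x ∈ s, x^k

def auxA (k : ℕ) (s : Finset ℕ) : ℕ := ∑ x ∈ s, ∏ y ∈ s.erase x, y^k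

lemma auxQ_pos {k : ℕ} {s : Finset ℕ} (h : ∀ x ∈ s, 0 < x) : 0 < auxQ k s :=
  Finset.prod_pos fun x hx => pow_pos (h x hx) k

lemma prime_dvd_auxQ {k t : ℕ} (htp : t.Prime) {s : Finset ℕ}
    (hs : ∀ x ∈ s, x.Prime) (hdvd : t ∣ auxQ k s) : t ∈ s := by
  obtain ⟨x, hx, hdx⟩ := htp.prime.exists_mem_finset_dvd hdvd
  have : t = x := (Nat.prime_dvd_prime_iff_eq htp (hs x hx)).mp (htp.dvd_of_dvd_pow hdx)
  rwa [this]

lemma prime_dvd_auxQ_of_mem {k t : ℕ} (hk : 1 ≤ k) {s : Finset ℕ} (ht : t ∈ s) :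
    t ∣ auxQ k s :=
  dvd_trans (dvd_pow_self t (by omega)) (Finset.dvd_prod_of_mem _ ht)

lemma auxA_le {k : ℕ} {s : Finset ℕ} (hpos : ∀ x ∈ s, 0 < x) :
    auxA k s ≤ s.card * auxQ k s := by
  have h : ∀ x ∈ s, ∏ y ∈ s.erase x, y^k ≤ auxQ k s := by
    intro x hx
    refine Nat.le_of_dvd (auxQ_pos hpos) ?_
    exact ⟨x^k, by rw [mul_comm]; exact (Finset.mul_prod_erase s _ hx).symm⟩
  calc auxA k s ≤ ∑ _x ∈ s, auxQ k s := Finset.sum_le_sum h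
    _ = s.card * auxQ k s := by rw [Finset.sum_const, smul_eq_mul]

lemma auxQ_cast_le {k : ℕ} {s : Finset ℕ} {B : ℝ} (hB : 0 ≤ B)
    (h : ∀ x ∈ s, (x:ℝ) ≤ B) : (auxQ k s : ℝ) ≤ B ^ (k * s.card) := by
  have : (auxQ k s : ℝ) = ∏ x ∈ s, (x:ℝ)^k := by
    unfold auxQ; push_cast; rfl
  rw [this]
  calc ∏ x ∈ s, (x:ℝ)^k ≤ ∏ _x ∈ s, B^k := by
        refine Finset.prod_le_prod (fun x _ => by positivity) ?_
        exact fun x hx => pow_le_pow_left₀ (by positivity) (h x hx) k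
    _ = B ^ (k * s.card) := by rw [Finset.prod_const, ← pow_mul, mul_comm]

lemma inj_nat {k : ℕ} (hk : 1 ≤ k) {s₁ s₂ : Finset ℕ}
    (h₁ : ∀ x ∈ s₁, x.Prime) (h₂ : ∀ x ∈ s₂, x.Prime)
    (hcard : s₁.card = s₂.card)
    (heq : auxA k s₁ * auxQ k s₂ = auxA k s₂ * auxQ k s₁) : s₁ = s₂ := by
  by_contra hne
  have hnsub : ¬ s₁ ⊆ s₂ := fun h => hne (Finset.eq_of_subset_of_card_le h (le_of_eq hcard.symm))
  obtain ⟨t, ht1, ht2⟩ := Finset.not_subset.mp hnsub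
  have htp : t.Prime := h₁ t ht1
  have htQ1 : t ∣ auxQ k s₁ := prime_dvd_auxQ_of_mem hk ht1
  have htAB : t ∣ auxA k s₁ * auxQ k s₂ := heq ▸ Dvd.dvd.mul_left htQ1 _
  rcases (Nat.Prime.dvd_mul htp).mp htAB with hA | hQ
  · -- t ∣ auxA k s₁ : contradiction
    have hsum : t ∣ ∑ x ∈ s₁.erase t, ∏ y ∈ s₁.erase x, y^k := by
      refine Finset.dvd_sum fun x hx => ?_
      have hxt : x ≠ t := (Finset.mem_erase.mp hx).1
      have htmem : t ∈ s₁.erase x := Finset.mem_erase.mpr ⟨fun h => hxt h.symm, ht1⟩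
      exact dvd_trans (dvd_pow_self t (by omega)) (Finset.dvd_prod_of_mem _ htmem)
    have hsplit : (∏ y ∈ s₁.erase t, y^k) + ∑ x ∈ s₁.erase t, ∏ y ∈ s₁.erase x, y^k
        = auxA k s₁ := Finset.add_sum_erase s₁ (fun x => ∏ y ∈ s₁.erase x, y^k) ht1
    have hdT : t ∣ ∏ y ∈ s₁.erase t, y^k := by
      have := Nat.dvd_sub hA hsum
      rwa [← hsplit, Nat.add_sub_cancel] at this
    obtain ⟨y, hy, hdy⟩ := htp.prime.exists_mem_finset_dvd hdT
    have hyp : y.Prime := h₁ y (Finset.mem_of_mem_erase hy)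
    have : t = y := (Nat.prime_dvd_prime_iff_eq htp hyp).mp (htp.dvd_of_dvd_pow hdy)
    exact (Finset.mem_erase.mp hy).1 this.symm
  · exact ht2 (prime_dvd_auxQ htp h₂ hQ)


open Filter in
set_option maxHeartbeats 1000000 in
theorem stmt_9 (k : ℕ) (hk : 1 ≤ k) (β : ℝ) (hβ : 0 < β) (hβ' : β < 1 / (5 * k))
    (u : ℕ) (hu : (u : ℝ) < β⁻¹ / (2 * k))
    (humax : ∀ v : ℕ, (v : ℝ) < β⁻¹ / (2 * k) → v ≤ u) :
    ∃ p₀ : ℕ, ∀ p : ℕ, p₀ ≤ p → p.Prime →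
      (({x : ZMod p | ∃ q : Fin u → ℕ, StrictMono q ∧
          (∀ i, (q i).Prime ∧ 2 ≤ q i ∧ (q i : ℝ) ≤ (p : ℝ) ^ β) ∧
          x = ∑ i, ((q i : ZMod p) ^ k)⁻¹}.ncard : ℝ)
        > (p : ℝ) ^ (1 / (2 * k : ℝ) - β) / (u.factorial * Real.log p ^ u)) := by
  have hk1 : (1:ℝ) ≤ (k:ℝ) := by exact_mod_cast hk
  have h2k0 : (0:ℝ) < 2*(k:ℝ) := by linarith
  have hβinv : β * β⁻¹ = 1 := mul_inv_cancel₀ hβ.ne'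
  -- 5k < β⁻¹
  have h5k : 5*(k:ℝ) < β⁻¹ := by
    have h5k0 : (0:ℝ) < 5*(k:ℝ) := by linarith
    have := one_div_lt_one_div_of_lt hβ hβ'
    rwa [one_div_one_div, one_div] at this
  -- exponent bound: β * (2ku) < 1
  have hukβ : β * (2*(k:ℝ)*u) < 1 := by
    have h1 : (u:ℝ) * (2*k) < β⁻¹ := (lt_div_iff₀ h2k0).mp hu
    nlinarith [mul_lt_mul_of_pos_left h1 hβ]
  -- lower exponent bound: 1/(2k) - β ≤ β * u
  have hlow : 1/(2*(k:ℝ)) - β ≤ β * u := by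
    have hnot : ¬ ((u+1 : ℕ) : ℝ) < β⁻¹ / (2 * k) := fun h => by
      have := humax (u+1) h; omega
    push_neg at hnot
    have h1 : β⁻¹ ≤ ((u:ℝ)+1) * (2*k) := by
      rw [div_le_iff₀ h2k0] at hnot
      push_cast at hnot
      linarith
    have h2 : 1 ≤ β * (((u:ℝ)+1) * (2*k)) := by nlinarith
    rw [sub_le_iff_le_add, div_le_iff₀ h2k0]
    nlinarith
  have hu2 : 2 ≤ u := by
    refine humax 2 ?_
    rw [lt_div_iff₀ h2k0]
    push_cast
    nlinarith
  have hu1R : (1:ℝ) ≤ u := by exact_mod_cast Nat.one_le_iff_ne_zero.mpr (by omega)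
  have hβ1 : β < 1 := by
    have : 1 / (5*(k:ℝ)) ≤ 1 := by
      rw [div_le_one (by linarith)]; linarith
    linarith
  -- log 2 / β ≥ 3
  have hlog2 : (0.6931471803 : ℝ) < Real.log 2 := Real.log_two_gt_d9
  have hc3 : (3:ℝ) ≤ Real.log 2 / β := by
    rw [le_div_iff₀ hβ]
    nlinarith
  set c₀ : ℝ := β * (2*(k:ℝ)*u) with hc₀
  -- eventual conditions
  have ev1 : ∀ᶠ p : ℕ in atTop, 3 ≤ p := eventually_ge_atTop 3
  have ev2 : ∀ᶠ p : ℕ in atTop, (u:ℝ) < (p:ℝ)^(1 - c₀) := by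
    have h := (tendsto_rpow_atTop (by linarith : (0:ℝ) < 1 - c₀)).comp
      tendsto_natCast_atTop_atTop (α := ℕ)
    exact h.eventually_gt_atTop u
  have ev3 : ∀ᶠ p : ℕ in atTop,
      ((u:ℝ)+1) * Real.log p + 2 * (Real.log 2 / β) ≤ (p:ℝ)^β ∧ 2 ≤ (p:ℝ)^β := by
    have hR : ∀ᶠ x : ℝ in atTop,
        ((u:ℝ)+1) * Real.log x + 2 * (Real.log 2 / β) ≤ x^β ∧ 2 ≤ x^β := by
      have hlo := (isLittleO_log_rpow_atTop hβ).bound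
        (c := 1/(2*((u:ℝ)+1))) (by positivity)
      have htop := (tendsto_rpow_atTop hβ).eventually_ge_atTop
        (max 2 (4 * (Real.log 2 / β)))
      filter_upwards [hlo, htop, eventually_ge_atTop (1:ℝ)] with x h1 h2 h3
      have hx0 : (0:ℝ) < x := by linarith
      have hlx : 0 ≤ Real.log x := Real.log_nonneg h3
      have hxb : 0 ≤ x^β := (Real.rpow_pos_of_pos hx0 β).le
      rw [Real.norm_eq_abs, Real.norm_eq_abs, abs_of_nonneg hlx, abs_of_nonneg hxb] at h1
      have h2a : 2 ≤ x^β := le_trans (le_max_left _ _) h2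
      have h2b : 4 * (Real.log 2 / β) ≤ x^β := le_trans (le_max_right _ _) h2
      constructor
      · have : ((u:ℝ)+1) * Real.log x ≤ x^β / 2 := by
          have hu0 : (0:ℝ) < (u:ℝ)+1 := by positivity
          calc ((u:ℝ)+1) * Real.log x ≤ ((u:ℝ)+1) * (1/(2*((u:ℝ)+1)) * x^β) := by
                exact mul_le_mul_of_nonneg_left h1 hu0.le
            _ = x^β / 2 := by field_simp
        linarith
      · exact h2a
    exact tendsto_natCast_atTop_atTop.eventually hR
  obtain ⟨p₀, hp₀⟩ := eventually_atTop.mp (ev1.and (ev2.and ev3))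
  refine ⟨p₀, fun p hpp₀ hp => ?_⟩
  obtain ⟨hp3, hE1, hE3a, hE3b⟩ := hp₀ p hpp₀
  haveI : Fact p.Prime := ⟨hp⟩
  haveI : NeZero p := ⟨hp.pos.ne'⟩
  set L := Real.log p with hL
  have hp1R : (1:ℝ) < p := by exact_mod_cast (by omega : 1 < p)
  have hp0R : (0:ℝ) < p := by linarith
  have hL0 : 0 < L := Real.log_pos hp1R
  set Pr : ℝ := (p:ℝ)^β with hPr
  have hPr0 : 0 < Pr := Real.rpow_pos_of_pos hp0R β
  have hPrp : Pr < p := by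
    calc Pr < (p:ℝ)^(1:ℝ) := Real.rpow_lt_rpow_of_exponent_lt hp1R hβ1
      _ = p := Real.rpow_one _
  set m : ℕ := ⌊(p:ℝ)^β⌋₊ with hm
  have hm2 : 2 ≤ m := Nat.le_floor (by exact_mod_cast hE3b)
  have hmPr : (m:ℝ) ≤ Pr := Nat.floor_le hPr0.le
  have hPrm : Pr < (m:ℝ) + 1 := Nat.lt_floor_add_one _
  set P : Finset ℕ := (Finset.range (m+1)).filter Nat.Prime with hPdef
  set N := P.card with hN
  -- the count condition
  have hE2 : (u:ℝ) + 2*Pr/L ≤ (N:ℝ) := by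
    have hch := cheb_real m hm2
    have hlogm_pos : (0:ℝ) < Real.log m := Real.log_pos (by exact_mod_cast hm2)
    have hlogm : Real.log m ≤ β * L := by
      calc Real.log m ≤ Real.log Pr := Real.log_le_log (by positivity) hmPr
        _ = β * L := Real.log_rpow hp0R β
    rw [← hPdef, ← hN] at hch
    have hmR1 : Pr - 2 ≤ (m:ℝ) - 1 := by linarith
    have hlog2pos : (0:ℝ) ≤ Real.log 2 := by linarith
    have hnum1 : (0:ℝ) ≤ Real.log 2 * ((m:ℝ)-1) := by
      have hm1R : (1:ℝ) ≤ (m:ℝ) := by exact_mod_cast (by omega : 1 ≤ m)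
      exact mul_nonneg hlog2pos (by linarith)
    have hnum2 : Real.log 2 * (Pr-2) ≤ Real.log 2 * ((m:ℝ)-1) :=
      mul_le_mul_of_nonneg_left hmR1 hlog2pos
    have hstep1 : Real.log 2 * (Pr-2) / (β*L) ≤ Real.log 2 * ((m:ℝ)-1) / Real.log m :=
      div_le_div₀ hnum1 hnum2 hlogm_pos hlogm
    have key : ((u:ℝ)+1)*L + 2*Pr ≤ (Real.log 2/β) * (Pr - 2) := by
      set c := Real.log 2 / β with hcdef
      have h1 : (c-2)*(((u:ℝ)+1)*L + 2*c) ≤ (c-2)*Pr :=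
        mul_le_mul_of_nonneg_left hE3a (by linarith)
      have h2 : 0 ≤ ((u:ℝ)+1)*L := by positivity
      nlinarith
    have heq : Real.log 2 * (Pr-2) / (β*L) = (Real.log 2/β) * (Pr-2) / L := by
      field_simp
    have hstep3 : ((u:ℝ)+1) + 2*Pr/L ≤ (Real.log 2/β) * (Pr-2) / L := by
      rw [le_div_iff₀ hL0]
      have hexp : (((u:ℝ)+1) + 2*Pr/L) * L = ((u:ℝ)+1)*L + 2*Pr := by
        field_simp
      rw [hexp]; exact key
    linarith
  -- members of P
  have hxP : ∀ x ∈ P, x.Prime ∧ 2 ≤ x ∧ (x:ℝ) ≤ Pr ∧ (x : ZMod p) ≠ 0 := by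
    intro x hx
    rw [hPdef, Finset.mem_filter, Finset.mem_range] at hx
    obtain ⟨hxm, hxp⟩ := hx
    have hx2 : 2 ≤ x := hxp.two_le
    have hxPr : (x:ℝ) ≤ Pr := le_trans (by exact_mod_cast (by omega : x ≤ m)) hmPr
    have hxltp : x < p := by
      have : (x:ℝ) < p := lt_of_le_of_lt hxPr hPrp
      exact_mod_cast this
    refine ⟨hxp, hx2, hxPr, ?_⟩
    intro h0
    rw [ZMod.natCast_eq_zero_iff] at h0
    have := Nat.le_of_dvd (by omega) h0
    omega
  classical
  set F : Finset ℕ → ZMod p := fun s => ∑ x ∈ s, ((x:ZMod p)^k)⁻¹ with hF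
  set T := Finset.powersetCard u P with hT
  -- key identity
  have hkey : ∀ s ⊆ P, F s * (auxQ k s : ZMod p) = (auxA k s : ZMod p) := by
    intro s hsP
    have hx0 : ∀ x ∈ s, ((x:ZMod p))^k ≠ 0 := fun x hx =>
      pow_ne_zero k ((hxP x (hsP hx)).2.2.2)
    have hQcast : ((auxQ k s : ℕ) : ZMod p) = ∏ x ∈ s, ((x:ZMod p))^k := by
      unfold auxQ; push_cast; rfl
    have hAcast : ((auxA k s : ℕ) : ZMod p) = ∑ x ∈ s, ∏ y ∈ s.erase x, ((y:ZMod p))^k := by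
      unfold auxA; push_cast; rfl
    rw [hQcast, hAcast, hF, Finset.sum_mul]
    refine Finset.sum_congr rfl fun x hx => ?_
    rw [← Finset.mul_prod_erase s (fun y => ((y:ZMod p))^k) hx]
    rw [inv_mul_cancel_left₀ (hx0 x hx)]
  have hQne : ∀ s ⊆ P, ((auxQ k s : ℕ) : ZMod p) ≠ 0 := by
    intro s hsP
    have : ((auxQ k s : ℕ) : ZMod p) = ∏ x ∈ s, ((x:ZMod p))^k := by
      unfold auxQ; push_cast; rfl
    rw [this]
    refine Finset.prod_ne_zero_iff.mpr fun x hx =>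
      pow_ne_zero k ((hxP x (hsP hx)).2.2.2)
  -- bound: auxA s * auxQ t < p for s,t ⊆ P of card u
  have hbound : ∀ s ⊆ P, ∀ t ⊆ P, s.card = u → t.card = u → auxA k s * auxQ k t < p := by
    intro s hsP t htP hsc htc
    have hpos : ∀ x ∈ s, 0 < x := fun x hx => by have := (hxP x (hsP hx)).2.1; omega
    have hposT : ∀ x ∈ t, 0 < x := fun x hx => by have := (hxP x (htP hx)).2.1; omega
    have hQs : (auxQ k s : ℝ) ≤ Pr ^ (k*u) := by
      rw [← hsc]
      exact auxQ_cast_le hPr0.le (fun x hx => (hxP x (hsP hx)).2.2.1)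
    have hQt : (auxQ k t : ℝ) ≤ Pr ^ (k*u) := by
      rw [← htc]
      exact auxQ_cast_le hPr0.le (fun x hx => (hxP x (htP hx)).2.2.1)
    have hA : (auxA k s : ℝ) ≤ u * auxQ k s := by
      have := auxA_le (k := k) hpos
      rw [hsc] at this
      exact_mod_cast this
    have hPrpow : Pr ^ (k*u) * Pr ^ (k*u) = (p:ℝ) ^ c₀ := by
      rw [← pow_add, hPr, ← Real.rpow_natCast ((p:ℝ)^β) (k*u + k*u), ← Real.rpow_mul hp0R.le]
      congr 1
      push_cast
      ring
    have hQs0 : (0:ℝ) ≤ (auxQ k s : ℝ) := by positivity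
    have hQt0 : (0:ℝ) ≤ (auxQ k t : ℝ) := by positivity
    have hQQ : (auxQ k s : ℝ) * (auxQ k t : ℝ) ≤ (p:ℝ) ^ c₀ := by
      rw [← hPrpow]
      exact mul_le_mul hQs hQt hQt0 (by positivity)
    have hfin : (auxA k s : ℝ) * (auxQ k t : ℝ) < p := by
      have h1 : (auxA k s : ℝ) * (auxQ k t : ℝ) ≤ (u : ℝ) * ((auxQ k s : ℝ) * (auxQ k t : ℝ)) := by
        nlinarith
      have h2 : (u : ℝ) * ((auxQ k s : ℝ) * (auxQ k t : ℝ)) ≤ (u:ℝ) * (p:ℝ)^c₀ := by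
        have : (0:ℝ) ≤ (u:ℝ) := by positivity
        nlinarith
      have h3 : (u:ℝ) * (p:ℝ)^c₀ < (p:ℝ)^(1-c₀) * (p:ℝ)^c₀ := by
        have hc0pos : (0:ℝ) < (p:ℝ)^c₀ := Real.rpow_pos_of_pos hp0R _
        exact mul_lt_mul_of_pos_right hE1 hc0pos
      have h4 : (p:ℝ)^(1-c₀) * (p:ℝ)^c₀ = p := by
        rw [← Real.rpow_add hp0R]
        norm_num
      calc (auxA k s : ℝ) * (auxQ k t : ℝ) ≤ (u : ℝ) * ((auxQ k s : ℝ) * (auxQ k t : ℝ)) := h1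
        _ ≤ (u:ℝ) * (p:ℝ)^c₀ := h2
        _ < (p:ℝ)^(1-c₀) * (p:ℝ)^c₀ := h3
        _ = p := by rw [h4]
    exact_mod_cast (by push_cast; exact hfin : ((auxA k s * auxQ k t : ℕ) : ℝ) < (p:ℝ))
  -- injectivity of F on T
  have hinj : Set.InjOn F ↑T := by
    intro s₁ hs₁ s₂ hs₂ hFeq
    obtain ⟨hs₁P, hs₁c⟩ := Finset.mem_powersetCard.mp (Finset.mem_coe.mp hs₁)
    obtain ⟨hs₂P, hs₂c⟩ := Finset.mem_powersetCard.mp (Finset.mem_coe.mp hs₂)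
    have hk₁ := hkey s₁ hs₁P
    have hk₂ := hkey s₂ hs₂P
    have hzeq : ((auxA k s₁ * auxQ k s₂ : ℕ) : ZMod p) = ((auxA k s₂ * auxQ k s₁ : ℕ) : ZMod p) := by
      push_cast
      calc ((auxA k s₁ : ℕ) : ZMod p) * (auxQ k s₂ : ℕ)
          = (F s₁ * (auxQ k s₁ : ℕ)) * (auxQ k s₂ : ℕ) := by rw [hk₁]
        _ = (F s₂ * (auxQ k s₂ : ℕ)) * (auxQ k s₁ : ℕ) := by rw [hFeq]; ring
        _ = ((auxA k s₂ : ℕ) : ZMod p) * (auxQ k s₁ : ℕ) := by rw [hk₂]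
    have hb₁ : auxA k s₁ * auxQ k s₂ < p := hbound s₁ hs₁P s₂ hs₂P hs₁c hs₂c
    have hb₂ : auxA k s₂ * auxQ k s₁ < p := hbound s₂ hs₂P s₁ hs₁P hs₂c hs₁c
    have hnateq : auxA k s₁ * auxQ k s₂ = auxA k s₂ * auxQ k s₁ := by
      have := congrArg ZMod.val hzeq
      rwa [ZMod.val_cast_of_lt hb₁, ZMod.val_cast_of_lt hb₂] at this
    exact inj_nat hk (fun x hx => (hxP x (hs₁P hx)).1) (fun x hx => (hxP x (hs₂P hx)).1)
      (hs₁c.trans hs₂c.symm) hnateq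
  -- each F s is in the set S
  set S := {x : ZMod p | ∃ q : Fin u → ℕ, StrictMono q ∧
      (∀ i, (q i).Prime ∧ 2 ≤ q i ∧ (q i : ℝ) ≤ Pr) ∧
      x = ∑ i, ((q i : ZMod p) ^ k)⁻¹} with hS
  have hmem : ∀ s ∈ T, F s ∈ S := by
    intro s hsT
    obtain ⟨hsP, hsc⟩ := Finset.mem_powersetCard.mp hsT
    rw [hS, Set.mem_setOf_eq]
    refine ⟨fun i => s.orderEmbOfFin hsc i, (s.orderEmbOfFin hsc).strictMono, fun i => ?_, ?_⟩
    · have hmem := Finset.orderEmbOfFin_mem s hsc i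
      obtain ⟨h1, h2, h3, _⟩ := hxP _ (hsP hmem)
      exact ⟨h1, h2, h3⟩
    · rw [hF]
      refine (Finset.sum_bij (fun (i : Fin u) _ => s.orderEmbOfFin hsc i) ?_ ?_ ?_ ?_).symm
      · exact fun i _ => Finset.orderEmbOfFin_mem s hsc i
      · exact fun i _ j _ hij => (s.orderEmbOfFin hsc).injective hij
      · intro x hx
        have : x ∈ Set.range (s.orderEmbOfFin hsc) := by
          rw [Finset.range_orderEmbOfFin]; exact hx
        obtain ⟨i, hi⟩ := this
        exact ⟨i, Finset.mem_univ i, hi⟩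
      · intro i _
        rfl
  -- cardinality lower bound
  have hScard : (N.choose u : ℝ) ≤ (S.ncard : ℝ) := by
    have hTcard : T.card = N.choose u := by
      rw [hT, Finset.card_powersetCard, hN]
    have himg : (T.image F).card = T.card := Finset.card_image_of_injOn hinj
    have hsub : ↑(T.image F) ⊆ S := by
      intro x hx
      obtain ⟨s, hsT, hFs⟩ := Finset.mem_image.mp hx
      exact hFs ▸ hmem s hsT
    have hle : (T.image F).card ≤ S.ncard := by
      calc (T.image F).card = (↑(T.image F) : Set (ZMod p)).ncard :=
            (Set.ncard_coe_finset _).symm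
        _ ≤ S.ncard := Set.ncard_le_ncard hsub (Set.toFinite S)
    exact_mod_cast hTcard ▸ himg ▸ hle
  -- final analytic chain
  have huN : u ≤ N := by
    have h2PrL : (0:ℝ) ≤ 2*Pr/L := by positivity
    have : (u:ℝ) ≤ (N:ℝ) := by linarith
    exact_mod_cast this
  set D : ℝ := (u.factorial : ℝ) * L ^ u with hD
  have hD0 : 0 < D := by positivity
  have hdesc : ((N + 1 - u : ℕ) : ℝ)^u ≤ (N.choose u : ℝ) * (u.factorial : ℝ) := by
    have h := Nat.pow_sub_le_descFactorial N u
    rw [Nat.descFactorial_eq_factorial_mul_choose, mul_comm] at h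
    exact_mod_cast h
  have hdcast : ((N + 1 - u : ℕ) : ℝ) = (N:ℝ) + 1 - u := by
    rw [Nat.cast_sub (by omega)]
    push_cast
    ring
  have hdge : 2*Pr/L ≤ ((N + 1 - u : ℕ) : ℝ) := by
    rw [hdcast]; linarith
  have hpow : (2*Pr/L)^u ≤ (N.choose u : ℝ) * u.factorial :=
    le_trans (pow_le_pow_left₀ (by positivity) hdge u) hdesc
  have hPru : Pr ^ u = (p:ℝ) ^ (β * u) := by
    rw [hPr, ← Real.rpow_natCast ((p:ℝ)^β) u, ← Real.rpow_mul hp0R.le]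
  have hfrac : (2*Pr/L)^u = 2^u * (p:ℝ)^(β*u) / L^u := by
    rw [div_pow, mul_pow, hPru]
  have hexp : (p:ℝ) ^ (1 / (2 * (k:ℝ)) - β) ≤ (p:ℝ)^(β*u) := by
    exact Real.rpow_le_rpow_of_exponent_le hp1R.le (by linarith)
  have hnum : (p:ℝ) ^ (1 / (2 * (k:ℝ)) - β) < 2^u * (p:ℝ)^(β*u) := by
    have hppos : (0:ℝ) < (p:ℝ)^(β*u) := Real.rpow_pos_of_pos hp0R _
    have h2u : (1:ℝ) < 2^u := one_lt_pow₀ (by norm_num) (by omega)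
    nlinarith
  have hA : (p:ℝ) ^ (1/(2*(k:ℝ)) - β) / D < (2^u * (p:ℝ)^(β*u)) / D :=
    (div_lt_div_iff_of_pos_right hD0).mpr hnum
  have hB : (2^u * (p:ℝ)^(β*u)) / D = (2*Pr/L)^u / u.factorial := by
    rw [hfrac, hD]
    have hu0 : ((u.factorial : ℝ)) ≠ 0 := by positivity
    have hL0' : L^u ≠ 0 := by positivity
    field_simp
  have hC : (2*Pr/L)^u / (u.factorial:ℝ) ≤ (N.choose u : ℝ) := by
    rw [div_le_iff₀ (by positivity)]
    exact hpow
  show (S.ncard : ℝ) > (p:ℝ) ^ (1 / (2 * (k:ℝ)) - β) / D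
  calc (p:ℝ) ^ (1 / (2 * (k:ℝ)) - β) / D < (2^u * (p:ℝ)^(β*u)) / D := hA
    _ = (2*Pr/L)^u / u.factorial := hB
    _ ≤ (N.choose u : ℝ) := hC
    _ ≤ (S.ncard : ℝ) := hScard
end
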